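/- arXiv:1707.00617 — 3 statements merged into one kernel-verified Lean document; each statement's English description precedes it below -/
import Mathlib

section
/- Let E = {1,...,N} × {1,...,C} with nonnegative unary weights w_i^c and nonnegative symmetric pairwise weights w_{ij}^c. Define h(A) = -(Σ_{(i,c)∈A} w_i^c + Σ_c Σ_{i<j with (i,c),(j,c)∈A} w_{ij}^c), p_i = max_{c} (w_i^c + Σ_{j≠i} w_{ij}^c), and h_1(A) = -Σ_{i=1}^N p_i (C - |A ∩ ({i}×{1,...,C})|). Then the function A ↦ h(A) + h_1(A) is monotonically non-decreasing: for all B ⊆ A ⊆ E, h(B) + h_1(B) ≤ h(A) + h_1(A). -/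
/-!
Adding a call–car pair `x = (i, c)` to an assignment `S` lowers `h` by `w i c` plus the
pairwise weights `W i j c` of the calls `j` already assigned to car `c`; since the weights are
nonnegative this loss is at most `w i c + ∑_{j ≠ i} W i j c ≤ p i`. On the other hand `h₁` is,
up to a constant, `A ↦ ∑_{(i, c) ∈ A} p i`, so it gains exactly `p i`. Hence `h + h₁` does not
decrease under single insertions, and therefore is monotone.
-/

open Finset

lemma Finset.sum_sum_insert_of_diag_eq_zero {ι M : Type*} [DecidableEq ι] [AddCommMonoid M]
    (g : ι → ι → M) {S : Finset ι} {x : ι} (hx : x ∉ S) (hgx : g x x = 0) :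
    ∑ a ∈ insert x S, ∑ b ∈ insert x S, g a b =
      ∑ a ∈ S, ∑ b ∈ S, g a b + ∑ b ∈ S, (g x b + g b x) := by
  simp only [sum_insert hx, hgx, zero_add, sum_add_distrib]
  abel

lemma Finset.sum_mul_card_inter_fiber_fst {α κ R : Type*} [Fintype α] [Fintype κ] [DecidableEq α]
    [DecidableEq κ] [CommSemiring R] (p : α → R) (A : Finset (α × κ)) :
    ∑ i, p i * #(A ∩ univ.filter (fun a : α × κ => a.1 = i)) = ∑ a ∈ A, p a.1 := by
  rw [← sum_fiberwise A Prod.fst (fun a => p a.1)]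
  refine sum_congr rfl fun i _ => ?_
  rw [inter_filter, inter_univ, sum_congr rfl fun a ha => by rw [(mem_filter.1 ha).2],
    sum_const, nsmul_eq_mul, mul_comm]

section SameCar

variable {α κ : Type*} [LinearOrder α] [DecidableEq κ] (W : α → α → κ → ℝ)

def sameCarWeight (a b : α × κ) : ℝ :=
  if a.1 < b.1 ∧ a.2 = b.2 then W a.1 b.1 a.2 else 0

lemma sameCarWeight_self (a : α × κ) : sameCarWeight W a a = 0 := by
  simp [sameCarWeight]

lemma sameCarWeight_add_swap (hsym : ∀ i j c, W i j c = W j i c) (x a : α × κ) :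
    sameCarWeight W x a + sameCarWeight W a x =
      if a.2 = x.2 ∧ a.1 ≠ x.1 then W x.1 a.1 x.2 else 0 := by
  unfold sameCarWeight
  rcases lt_trichotomy a.1 x.1 with h | h | h
  · simp only [h, not_lt_of_gt h, eq_comm (a := x.2)]
    split_ifs with hc <;> simp_all [hsym a.1]
  · simp [h]
  · simp [h, h.ne', not_lt_of_gt h, eq_comm (a := x.2)]

lemma sum_sameCarWeight_add_swap_le [Fintype α] [Fintype κ]
    (hW : ∀ i j c, 0 ≤ W i j c) (hsym : ∀ i j c, W i j c = W j i c)
    (S : Finset (α × κ)) (x : α × κ) :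
    ∑ b ∈ S, (sameCarWeight W x b + sameCarWeight W b x) ≤
      ∑ j ∈ univ.filter (· ≠ x.1), W x.1 j x.2 := by
  simp only [sameCarWeight_add_swap W hsym]
  calc _ ≤ ∑ b : α × κ, if b.2 = x.2 ∧ b.1 ≠ x.1 then W x.1 b.1 x.2 else 0 :=
        sum_le_sum_of_subset_of_nonneg (subset_univ S) fun b _ _ => by
          split_ifs <;> simp [hW]
    _ = _ := by
        rw [Fintype.sum_prod_type, sum_filter]
        refine sum_congr rfl fun j _ => ?_
        simp [and_comm (a := _ = x.2), ite_and]

end SameCar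

theorem stmt_5_general (N C : ℕ) [NeZero C]
    (w : Fin N → Fin C → ℝ) (W : Fin N → Fin N → Fin C → ℝ)
    (hW : ∀ i j c, 0 ≤ W i j c)
    (hsym : ∀ i j c, W i j c = W j i c)
    (h h₁ : Finset (Fin N × Fin C) → ℝ) (p : Fin N → ℝ)
    (hh : ∀ A : Finset (Fin N × Fin C),
      h A = -((∑ a ∈ A, w a.1 a.2) +
        ∑ a ∈ A, ∑ b ∈ A, if a.1 < b.1 ∧ a.2 = b.2 then W a.1 b.1 a.2 else 0))
    (hp : ∀ i, p i = Finset.univ.sup' Finset.univ_nonempty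
      (fun c => w i c + ∑ j ∈ Finset.univ.filter (fun j => j ≠ i), W i j c))
    (hh₁ : ∀ A : Finset (Fin N × Fin C),
      h₁ A = -∑ i, p i * ((C : ℝ) -
        ((A ∩ Finset.univ.filter (fun a : Fin N × Fin C => a.1 = i)).card : ℝ))) :
    ∀ A B : Finset (Fin N × Fin C), B ⊆ A → h B + h₁ B ≤ h A + h₁ A := by
  suffices Monotone fun A => h A + h₁ A from fun A B hBA => this hBA
  refine monotone_iff_forall_le_insert.2 fun S x hx => ?_
  have h_eq : ∀ A, h A = -((∑ a ∈ A, w a.1 a.2) + ∑ a ∈ A, ∑ b ∈ A, sameCarWeight W a b) := hh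
  have h₁_eq : ∀ A, h₁ A = ∑ a ∈ A, p a.1 - C * ∑ i, p i := fun A => by
    rw [hh₁, ← sum_mul_card_inter_fiber_fst p A, mul_sum, ← sum_sub_distrib, ← sum_neg_distrib]
    exact sum_congr rfl fun i _ => by ring
  have hpx : w x.1 x.2 + ∑ j ∈ univ.filter (· ≠ x.1), W x.1 j x.2 ≤ p x.1 :=
    hp x.1 ▸ le_sup' (fun c => w x.1 c + ∑ j ∈ univ.filter (· ≠ x.1), W x.1 j c) (mem_univ x.2)
  have hpair := sum_sameCarWeight_add_swap_le W hW hsym S x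
  rw [h_eq, h_eq, h₁_eq, h₁_eq, sum_sum_insert_of_diag_eq_zero _ hx (sameCarWeight_self W x),
    sum_insert hx, sum_insert hx]
  linarith

theorem stmt_5 (N C : ℕ) [NeZero C]
    (w : Fin N → Fin C → ℝ) (W : Fin N → Fin N → Fin C → ℝ)
    (hw : ∀ i c, 0 ≤ w i c) (hW : ∀ i j c, 0 ≤ W i j c)
    (hsym : ∀ i j c, W i j c = W j i c)
    (h h₁ : Finset (Fin N × Fin C) → ℝ) (p : Fin N → ℝ)
    (hh : ∀ A : Finset (Fin N × Fin C),
      h A = -((∑ a ∈ A, w a.1 a.2) +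
        ∑ a ∈ A, ∑ b ∈ A, if a.1 < b.1 ∧ a.2 = b.2 then W a.1 b.1 a.2 else 0))
    (hp : ∀ i, p i = Finset.univ.sup' Finset.univ_nonempty
      (fun c => w i c + ∑ j ∈ Finset.univ.filter (fun j => j ≠ i), W i j c))
    (hh₁ : ∀ A : Finset (Fin N × Fin C),
      h₁ A = -∑ i, p i * ((C : ℝ) -
        ((A ∩ Finset.univ.filter (fun a : Fin N × Fin C => a.1 = i)).card : ℝ))) :
    ∀ A B : Finset (Fin N × Fin C), B ⊆ A → h B + h₁ B ≤ h A + h₁ A :=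
  stmt_5_general N C w W hW hsym h h₁ p hh hp hh₁
end

section
/- With the notation of the previous context (nonnegative weights, h, h_1, p_i as defined), for any set B ⊆ E and any element (i,c) ∉ B, the marginal gain satisfies h(B ∪ {(i,c)}) + h_1(B ∪ {(i,c)}) - h(B) - h_1(B) = p_i - w_i^c - Σ_{j : (j,c) ∈ B} w_{ij}^c ≥ 0. -/
/-! Adding `(i, c)` to `B` fills one more slot of vertex `i`, so `h₁` grows by exactly `p i`,
while `h` drops by `w i c` plus the weights `W i j c` towards the vertices `j` already coloured
`c`; symmetry of `W` merges the two orientations `j < i` and `i < j` of the pair terms. These `j`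
differ from `i` and `W ≥ 0`, so the drop is at most the `c`-th candidate in the maximum defining
`p i`. -/

open Finset

namespace Finset

variable {α M : Type*} [DecidableEq α]

theorem sum_sum_insert_of_notMem [AddCommMonoid M] {x : α} {s : Finset α} (hx : x ∉ s)
    (f : α → α → M) :
    ∑ a ∈ insert x s, ∑ b ∈ insert x s, f a b
      = ∑ a ∈ s, ∑ b ∈ s, f a b + f x x + ∑ b ∈ s, (f x b + f b x) := by
  simp only [sum_insert hx, sum_add_distrib]
  abel

theorem card_insert_inter_of_notMem {x : α} {s t : Finset α} (hx : x ∉ s) :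
    #(insert x s ∩ t) = #(s ∩ t) + if x ∈ t then 1 else 0 := by
  split_ifs with ht
  · rw [insert_inter_of_mem ht, card_insert_of_notMem fun h => hx (mem_inter.1 h).1]
  · rw [insert_inter_of_notMem ht, add_zero]

theorem sum_filter_prodMk_mem {ι κ : Type*} [Fintype ι] [DecidableEq ι] [DecidableEq κ]
    [AddCommMonoid M] (B : Finset (ι × κ)) (c : κ) (g : ι → M) :
    ∑ j ∈ univ.filter (fun j => (j, c) ∈ B), g j = ∑ b ∈ B, if b.2 = c then g b.1 else 0 := by
  rw [← sum_filter]
  refine sum_nbij' (·, c) Prod.fst ?_ ?_ ?_ ?_ ?_ <;> aesop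

end Finset

variable {ι κ M : Type*} [Fintype ι] [LinearOrder ι] [DecidableEq κ]

theorem sum_sum_insert_ite_lt_snd_eq [AddCommMonoid M] (W : ι → ι → κ → M)
    (hsym : ∀ i j c, W i j c = W j i c) {B : Finset (ι × κ)} {i : ι} {c : κ}
    (hic : (i, c) ∉ B) :
    ∑ a ∈ insert (i, c) B, ∑ b ∈ insert (i, c) B,
        (if a.1 < b.1 ∧ a.2 = b.2 then W a.1 b.1 a.2 else 0)
      = ∑ a ∈ B, ∑ b ∈ B, (if a.1 < b.1 ∧ a.2 = b.2 then W a.1 b.1 a.2 else 0)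
        + ∑ j ∈ univ.filter (fun j => (j, c) ∈ B), W i j c := by
  rw [sum_sum_insert_of_notMem hic, sum_filter_prodMk_mem]
  simp only [lt_irrefl, false_and, if_false, add_zero]
  refine congrArg _ (sum_congr rfl fun ⟨j, d⟩ hjd => ?_)
  by_cases hd : d = c
  · subst hd
    have hji : j ≠ i := fun h => hic (h ▸ hjd)
    rcases hji.lt_or_gt with h | h
    · simp [h, h.not_gt, hsym j i]
    · simp [h, h.not_gt]
  · simp [hd, Ne.symm hd]

theorem sum_mul_sub_card_insert_inter_fiber [Fintype κ] (p : ι → ℝ) (C : ℝ)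
    {B : Finset (ι × κ)} {i : ι} {c : κ} (hic : (i, c) ∉ B) :
    ∑ i', p i' * (C - (#(insert (i, c) B ∩ univ.filter (fun a => a.1 = i')) : ℝ))
      = ∑ i', p i' * (C - (#(B ∩ univ.filter (fun a => a.1 = i')) : ℝ)) - p i := by
  simp only [card_insert_inter_of_notMem hic, mem_filter, mem_univ, true_and]
  push_cast
  simp only [mul_sub, mul_add, mul_ite, mul_one, mul_zero, sum_sub_distrib, sum_add_distrib,
    sum_ite_eq, mem_univ, ↓reduceIte]
  ring

theorem add_sum_filter_le_sup' [Fintype κ] [Nonempty κ] [AddCommMonoid M] [LinearOrder M]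
    [IsOrderedAddMonoid M] (w : ι → κ → M) (W : ι → ι → κ → M) {B : Finset (ι × κ)}
    {i : ι} {c : κ} (hW : ∀ j, 0 ≤ W i j c) (hic : (i, c) ∉ B) :
    w i c + ∑ j ∈ univ.filter (fun j => (j, c) ∈ B), W i j c
      ≤ univ.sup' univ_nonempty
          (fun c => w i c + ∑ j ∈ univ.filter (fun j => j ≠ i), W i j c) := by
  have h_subset : univ.filter (fun j => (j, c) ∈ B) ⊆ univ.filter (fun j => j ≠ i) := by
    intro j hj
    simp only [mem_filter, mem_univ, true_and] at hj ⊢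
    exact fun h => hic (h ▸ hj)
  calc w i c + ∑ j ∈ univ.filter (fun j => (j, c) ∈ B), W i j c
      ≤ w i c + ∑ j ∈ univ.filter (fun j => j ≠ i), W i j c :=
        add_le_add_right (sum_le_sum_of_subset_of_nonneg h_subset fun j _ _ => hW j) _
    _ ≤ _ := le_sup' (fun c => w i c + ∑ j ∈ univ.filter (fun j => j ≠ i), W i j c) (mem_univ c)

theorem stmt_6_general (N C : ℕ) [NeZero C]
    (w : Fin N → Fin C → ℝ) (W : Fin N → Fin N → Fin C → ℝ)
    (hW : ∀ i j c, 0 ≤ W i j c)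
    (hsym : ∀ i j c, W i j c = W j i c)
    (h h₁ : Finset (Fin N × Fin C) → ℝ) (p : Fin N → ℝ)
    (hh : ∀ A : Finset (Fin N × Fin C),
      h A = -((∑ a ∈ A, w a.1 a.2) +
        ∑ a ∈ A, ∑ b ∈ A, if a.1 < b.1 ∧ a.2 = b.2 then W a.1 b.1 a.2 else 0))
    (hp : ∀ i, p i = Finset.univ.sup' Finset.univ_nonempty
      (fun c => w i c + ∑ j ∈ Finset.univ.filter (fun j => j ≠ i), W i j c))
    (hh₁ : ∀ A : Finset (Fin N × Fin C),
      h₁ A = -∑ i, p i * ((C : ℝ) -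
        ((A ∩ Finset.univ.filter (fun a : Fin N × Fin C => a.1 = i)).card : ℝ))) :
    ∀ B : Finset (Fin N × Fin C),
      (∀ i, (B ∩ Finset.univ.filter (fun a : Fin N × Fin C => a.1 = i)).card ≤ 1) →
      ∀ i c, (i, c) ∉ B →
        (h (insert (i, c) B) + h₁ (insert (i, c) B) - h B - h₁ B =
          p i - w i c - ∑ j ∈ Finset.univ.filter (fun j => (j, c) ∈ B), W i j c) ∧
        0 ≤ h (insert (i, c) B) + h₁ (insert (i, c) B) - h B - h₁ B := by
  intro B _ i c hic
  have h_gain : h (insert (i, c) B) - h B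
      = -(w i c + ∑ j ∈ univ.filter (fun j => (j, c) ∈ B), W i j c) := by
    rw [hh, hh, sum_insert hic, sum_sum_insert_ite_lt_snd_eq W hsym hic]
    ring
  have h₁_gain : h₁ (insert (i, c) B) - h₁ B = p i := by
    rw [hh₁, hh₁, sum_mul_sub_card_insert_inter_fiber p _ hic]
    ring
  have h_loss_le : w i c + ∑ j ∈ univ.filter (fun j => (j, c) ∈ B), W i j c ≤ p i :=
    hp i ▸ add_sum_filter_le_sup' w W (fun j => hW i j c) hic
  constructor <;> linarith

theorem stmt_6 (N C : ℕ) [NeZero C]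
    (w : Fin N → Fin C → ℝ) (W : Fin N → Fin N → Fin C → ℝ)
    (hw : ∀ i c, 0 ≤ w i c) (hW : ∀ i j c, 0 ≤ W i j c)
    (hsym : ∀ i j c, W i j c = W j i c)
    (h h₁ : Finset (Fin N × Fin C) → ℝ) (p : Fin N → ℝ)
    (hh : ∀ A : Finset (Fin N × Fin C),
      h A = -((∑ a ∈ A, w a.1 a.2) +
        ∑ a ∈ A, ∑ b ∈ A, if a.1 < b.1 ∧ a.2 = b.2 then W a.1 b.1 a.2 else 0))
    (hp : ∀ i, p i = Finset.univ.sup' Finset.univ_nonempty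
      (fun c => w i c + ∑ j ∈ Finset.univ.filter (fun j => j ≠ i), W i j c))
    (hh₁ : ∀ A : Finset (Fin N × Fin C),
      h₁ A = -∑ i, p i * ((C : ℝ) -
        ((A ∩ Finset.univ.filter (fun a : Fin N × Fin C => a.1 = i)).card : ℝ))) :
    ∀ B : Finset (Fin N × Fin C),
      (∀ i, (B ∩ Finset.univ.filter (fun a : Fin N × Fin C => a.1 = i)).card ≤ 1) →
      ∀ i c, (i, c) ∉ B →
        (h (insert (i, c) B) + h₁ (insert (i, c) B) - h B - h₁ B =
          p i - w i c - ∑ j ∈ Finset.univ.filter (fun j => (j, c) ∈ B), W i j c) ∧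
        0 ≤ h (insert (i, c) B) + h₁ (insert (i, c) B) - h B - h₁ B :=
  stmt_6_general N C w W hW hsym h h₁ p hh hp hh₁
end

section
/- Let E be a finite set, F : 2^E → ℝ a monotonically non-decreasing submodular set function with F(∅) = 0, and M = (E, I) a matroid on E. Let S be the output of the greedy algorithm that starts from ∅ and repeatedly adds an element maximizing the marginal gain while maintaining independence, stopping when no independent augmentation exists. Then F(S) ≥ (1/2) · max{F(A) : A ∈ I}. -/
/-!
Write `S_i` for the first `i` greedy picks and `ρ i = F S_{i+1} - F S_i` for the gain of step
`i`. Submodularity and the greedy choice make `ρ` antitone, and `∑ ρ i = F S`. Every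
`a ∈ A \ S` has an exit time `t a`: the last step before which `a` could still be added to the
greedy set. At that step greedy preferred its own pick, so by submodularity the gain of `a` over
`S` is at most `ρ (t a)`. The exchange axiom, applied to the independent sets `S_i` and
`{a ∈ A \ S | t a < i}`, shows that at most `i` elements exit before step `i`; as `ρ` is
antitone this bounds `∑_{a ∈ A \ S} ρ (t a)` by `∑ ρ i = F S`. Hence
`F A ≤ F (S ∪ A) ≤ F S + ∑_{a ∈ A \ S} (F (S + a) - F S) ≤ 2 F S`.
-/

open Finset

namespace List

variable {α : Type*} [DecidableEq α]

lemma toFinset_take_subset_toFinset_take (L : List α) {i j : ℕ} (h : i ≤ j) :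
    (L.take i).toFinset ⊆ (L.take j).toFinset := fun _ hx =>
  mem_toFinset.2 (L.take_subset_take_left h (mem_toFinset.1 hx))

lemma card_toFinset_take_le (L : List α) (i : ℕ) : #(L.take i).toFinset ≤ i :=
  (toFinset_card_le _).trans (length_take_le _ _)

lemma toFinset_take_add_one (L : List α) {i : ℕ} (hi : i < L.length) :
    (L.take (i + 1)).toFinset = insert L[i] (L.take i).toFinset := by
  rw [take_add_one, getElem?_eq_getElem hi, Option.toList_some, toFinset_append,
    toFinset_cons, toFinset_nil, insert_empty_eq, Finset.union_singleton]

lemma Nodup.getElem_notMem_toFinset_take {L : List α} (hL : L.Nodup) {i : ℕ}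
    (hi : i < L.length) : L[i] ∉ (L.take i).toFinset := by
  simp only [mem_toFinset, mem_take_iff_getElem]
  rintro ⟨j, hj, hji⟩
  rw [hL.getElem_inj_iff] at hji
  omega

end List

lemma Nat.exists_lt_and_not_succ {p : ℕ → Prop} (h0 : p 0) {n : ℕ} (hn : ¬ p n) :
    ∃ t < n, p t ∧ ¬ p (t + 1) := by
  induction n with
  | zero => exact absurd h0 hn
  | succ n ih =>
    by_cases hpn : p n
    · exact ⟨n, n.lt_succ_self, hpn, hn⟩
    · obtain ⟨t, htn, ht⟩ := ih hpn
      exact ⟨t, htn.trans n.lt_succ_self, ht⟩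

/-- The hypothesis says that the `j`-th smallest value of `t` on `T` is at least `j`. -/
lemma Finset.sum_comp_le_sum_range_of_card_filter_lt_le {β : Type*} [DecidableEq β]
    {ρ : ℕ → ℝ} (hρ : Antitone ρ) (T : Finset β) (t : β → ℕ)
    (hcount : ∀ i, #(T.filter (t · < i)) ≤ i) :
    ∑ a ∈ T, ρ (t a) ≤ ∑ i ∈ range #T, ρ i := by
  induction T using Finset.induction_on_max_value t with
  | empty => simp
  | insert a s ha hmax ih =>
    have hs : ∀ i, #(s.filter (t · < i)) ≤ i := fun i =>
      (card_le_card (filter_subset_filter _ (subset_insert a s))).trans (hcount i)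
    have hcard : #s ≤ t a := by
      have h := hcount (t a + 1)
      rw [filter_true_of_mem (fun x hx => Nat.lt_succ_of_le ?_), card_insert_of_notMem ha] at h
      · omega
      · rcases mem_insert.1 hx with rfl | hx
        exacts [le_rfl, hmax x hx]
    rw [sum_insert ha, card_insert_of_notMem ha, sum_range_succ]
    linarith [ih hs, hρ hcard]

section Matroid

variable {α : Type*} [DecidableEq α] {Ind : Finset α → Prop}

lemma card_le_card_of_forall_not_indep_insert
    (hIexch : ∀ A B : Finset α, Ind A → Ind B → #A < #B →
      ∃ e ∈ B \ A, Ind (insert e A))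
    {I D : Finset α} (hI : Ind I) (hD : Ind D) (hmax : ∀ e ∈ D \ I, ¬ Ind (insert e I)) :
    #D ≤ #I := by
  by_contra! hlt
  obtain ⟨e, he, hIe⟩ := hIexch I D hI hD hlt
  exact hmax e he hIe

lemma card_filter_exit_lt_le (hIdown : ∀ A B : Finset α, Ind A → B ⊆ A → Ind B)
    (hIexch : ∀ A B : Finset α, Ind A → Ind B → #A < #B →
      ∃ e ∈ B \ A, Ind (insert e A))
    {A : Finset α} (hA : Ind A) {P : ℕ → Finset α} (hP : Monotone P)
    (hPind : ∀ i, Ind (P i)) (hPcard : ∀ i, #(P i) ≤ i) (t : α → ℕ)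
    (ht : ∀ a ∈ A, ¬ Ind (insert a (P (t a + 1)))) (i : ℕ) :
    #(A.filter (t · < i)) ≤ i := by
  refine (card_le_card_of_forall_not_indep_insert hIexch (hPind i)
    (hIdown A _ hA (filter_subset _ _)) fun e he hIe => ?_).trans (hPcard i)
  obtain ⟨heA, hei⟩ := mem_filter.1 (mem_sdiff.1 he).1
  exact ht e heA (hIdown _ _ hIe (insert_subset_insert e (hP (Nat.succ_le_of_lt hei))))

end Matroid

section Greedy

variable {α : Type*} [DecidableEq α]

def IsSubmodular (F : Finset α → ℝ) : Prop :=
  ∀ A B : Finset α, B ⊆ A → ∀ e, e ∉ A → F (insert e A) - F A ≤ F (insert e B) - F B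

def IsGreedyRun (F : Finset α → ℝ) (Ind : Finset α → Prop) (L : List α) : Prop :=
  ∀ i (hi : i < L.length), Ind (insert L[i] (L.take i).toFinset) ∧
    ∀ e ∉ (L.take i).toFinset, Ind (insert e (L.take i).toFinset) →
      F (insert e (L.take i).toFinset) ≤ F (insert L[i] (L.take i).toFinset)

/-- This is `0` for `i ≥ L.length`. -/
def greedyGain (F : Finset α → ℝ) (L : List α) (i : ℕ) : ℝ :=
  F (L.take (i + 1)).toFinset - F (L.take i).toFinset

variable {F : Finset α → ℝ} {Ind : Finset α → Prop} {L : List α}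

lemma IsSubmodular.sub_le_sum (hsub : IsSubmodular F) (S B : Finset α) :
    F (S ∪ B) - F S ≤ ∑ b ∈ B, (F (insert b S) - F S) := by
  induction B using Finset.induction_on with
  | empty => simp
  | insert a B ha ih =>
    rw [sum_insert ha, union_insert]
    by_cases haS : a ∈ S
    · rw [insert_eq_of_mem (mem_union_left B haS), insert_eq_of_mem haS]
      linarith
    · have := hsub (S ∪ B) S subset_union_left a (by simp [haS, ha])
      linarith

lemma greedyGain_nonneg (hmono : ∀ A B : Finset α, B ⊆ A → F B ≤ F A) (i : ℕ) :
    0 ≤ greedyGain F L i :=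
  sub_nonneg.2 (hmono _ _ (L.toFinset_take_subset_toFinset_take i.le_succ))

lemma sum_greedyGain : ∑ i ∈ range L.length, greedyGain F L i = F L.toFinset - F ∅ := by
  simp only [greedyGain, sum_range_sub (fun i => F (L.take i).toFinset), List.take_length,
    List.take_zero, List.toFinset_nil]

namespace IsGreedyRun

lemma indep_take (hG : IsGreedyRun F Ind L) (hIempty : Ind ∅) (i : ℕ) :
    Ind (L.take i).toFinset := by
  induction i with
  | zero => simpa using hIempty
  | succ i ih =>
    by_cases hi : i < L.length
    · rw [L.toFinset_take_add_one hi]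
      exact (hG i hi).1
    · rwa [List.take_of_length_le (by omega), ← List.take_of_length_le (l := L) (not_lt.1 hi)]

/-- Step `i + 1` could already have been taken at step `i`, where it gained more by
submodularity, yet greedy preferred its own pick. -/
lemma antitone_greedyGain (hG : IsGreedyRun F Ind L) (hL : L.Nodup)
    (hmono : ∀ A B : Finset α, B ⊆ A → F B ≤ F A) (hsub : IsSubmodular F)
    (hIdown : ∀ A B : Finset α, Ind A → B ⊆ A → Ind B) : Antitone (greedyGain F L) := by
  refine antitone_nat_of_succ_le fun i => ?_
  by_cases hi : i + 1 < L.length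
  · have hi' : i < L.length := by omega
    have hsubset := L.toFinset_take_subset_toFinset_take i.le_succ
    have hnotMem := hL.getElem_notMem_toFinset_take hi
    have hsubmod := hsub _ _ hsubset _ hnotMem
    have hgreedy := (hG i hi').2 L[i + 1] (fun h => hnotMem (hsubset h))
      (hIdown _ _ (hG (i + 1) hi).1 (insert_subset_insert _ hsubset))
    simp only [greedyGain, L.toFinset_take_add_one hi, L.toFinset_take_add_one hi'] at hsubmod ⊢
    linarith
  · rw [greedyGain, List.take_of_length_le (by omega), List.take_of_length_le (by omega), sub_self]
    exact greedyGain_nonneg hmono i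

lemma sub_le_greedyGain (hG : IsGreedyRun F Ind L) (hsub : IsSubmodular F) {a : α}
    (ha : a ∉ L.toFinset) {t : ℕ} (ht : t < L.length)
    (hInd : Ind (insert a (L.take t).toFinset)) :
    F (insert a L.toFinset) - F L.toFinset ≤ greedyGain F L t := by
  have hsubset : (L.take t).toFinset ⊆ L.toFinset := by
    simpa using L.toFinset_take_subset_toFinset_take (j := L.length) ht.le
  have hsubmod := hsub _ _ hsubset a ha
  have hgreedy := (hG t ht).2 a (fun h => ha (hsubset h)) hInd
  rw [greedyGain, L.toFinset_take_add_one ht]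
  linarith

end IsGreedyRun

end Greedy

theorem stmt_7_general {α : Type*} [DecidableEq α]
    (F : Finset α → ℝ) (Ind : Finset α → Prop)
    (hF0 : F ∅ = 0)
    (hmono : ∀ A B : Finset α, B ⊆ A → F B ≤ F A)
    (hsub : ∀ A B : Finset α, B ⊆ A → ∀ e, e ∉ A →
      F (insert e A) - F A ≤ F (insert e B) - F B)
    (hIempty : Ind ∅)
    (hIdown : ∀ A B : Finset α, Ind A → B ⊆ A → Ind B)
    (hIexch : ∀ A B : Finset α, Ind A → Ind B → A.card < B.card →
      ∃ e ∈ B \ A, Ind (insert e A))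
    (L : List α) (hnodup : L.Nodup)
    (S : Finset α) (hS : S = L.toFinset)
    -- each greedy step is independent and maximizes the marginal gain
    (hstep : ∀ k : Fin L.length,
      Ind (insert (L.get k) (L.take k).toFinset) ∧
      ∀ e, e ∉ (L.take (k : ℕ)).toFinset → Ind (insert e (L.take (k : ℕ)).toFinset) →
        F (insert e (L.take (k : ℕ)).toFinset) ≤
          F (insert (L.get k) (L.take (k : ℕ)).toFinset))
    -- greedy stops when no independent augmentation exists
    (hstop : ∀ e, e ∉ S → ¬ Ind (insert e S)) :
    ∀ A : Finset α, Ind A → (1 / 2 : ℝ) * F A ≤ F S := by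
  subst hS
  intro A hA
  have hG : IsGreedyRun F Ind L := fun i hi => hstep ⟨i, hi⟩
  set T := A \ L.toFinset
  have hexit : ∀ a ∈ T, ∃ t < L.length,
      Ind (insert a (L.take t).toFinset) ∧ ¬ Ind (insert a (L.take (t + 1)).toFinset) := by
    intro a ha
    refine Nat.exists_lt_and_not_succ (p := fun i => Ind (insert a (L.take i).toFinset)) ?_ ?_
    · simpa using hIdown A {a} hA (singleton_subset_iff.2 (mem_sdiff.1 ha).1)
    · simpa using hstop a (mem_sdiff.1 ha).2
  choose! t ht_lt ht_indep ht_exit using hexit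
  have hcount := card_filter_exit_lt_le hIdown hIexch (hIdown A T hA sdiff_subset)
    (fun _ _ => L.toFinset_take_subset_toFinset_take) (hG.indep_take hIempty)
    L.card_toFinset_take_le t ht_exit
  have hTcard : #T ≤ L.length := by
    simpa [filter_true_of_mem ht_lt] using hcount L.length
  have hunion : F A ≤ F L.toFinset + ∑ a ∈ T, (F (insert a L.toFinset) - F L.toFinset) := by
    have := IsSubmodular.sub_le_sum hsub L.toFinset T
    rw [union_sdiff_self_eq_union] at this
    linarith [hmono _ _ (subset_union_right (s₁ := L.toFinset) (s₂ := A))]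
  have hgains : ∑ a ∈ T, (F (insert a L.toFinset) - F L.toFinset) ≤ F L.toFinset :=
    calc _ ≤ ∑ a ∈ T, greedyGain F L (t a) := sum_le_sum fun a ha =>
            hG.sub_le_greedyGain hsub (mem_sdiff.1 ha).2 (ht_lt a ha) (ht_indep a ha)
      _ ≤ ∑ i ∈ range #T, greedyGain F L i := sum_comp_le_sum_range_of_card_filter_lt_le
            (hG.antitone_greedyGain hnodup hmono hsub hIdown) T t hcount
      _ ≤ ∑ i ∈ range L.length, greedyGain F L i := sum_le_sum_of_subset_of_nonneg
            (range_subset_range.2 hTcard) fun i _ _ => greedyGain_nonneg hmono i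
      _ = F L.toFinset := by rw [sum_greedyGain, hF0, sub_zero]
  linarith

theorem stmt_7 {α : Type*} [DecidableEq α] [Fintype α]
    (F : Finset α → ℝ) (Ind : Finset α → Prop)
    (hF0 : F ∅ = 0)
    (hmono : ∀ A B : Finset α, B ⊆ A → F B ≤ F A)
    (hsub : ∀ A B : Finset α, B ⊆ A → ∀ e, e ∉ A →
      F (insert e A) - F A ≤ F (insert e B) - F B)
    (hIempty : Ind ∅)
    (hIdown : ∀ A B : Finset α, Ind A → B ⊆ A → Ind B)
    (hIexch : ∀ A B : Finset α, Ind A → Ind B → A.card < B.card →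
      ∃ e ∈ B \ A, Ind (insert e A))
    (L : List α) (hnodup : L.Nodup)
    (S : Finset α) (hS : S = L.toFinset)
    -- each greedy step is independent and maximizes the marginal gain
    (hstep : ∀ k : Fin L.length,
      Ind (insert (L.get k) (L.take k).toFinset) ∧
      ∀ e, e ∉ (L.take (k : ℕ)).toFinset → Ind (insert e (L.take (k : ℕ)).toFinset) →
        F (insert e (L.take (k : ℕ)).toFinset) ≤
          F (insert (L.get k) (L.take (k : ℕ)).toFinset))
    -- greedy stops when no independent augmentation exists
    (hstop : ∀ e, e ∉ S → ¬ Ind (insert e S)) :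
    ∀ A : Finset α, Ind A → (1 / 2 : ℝ) * F A ≤ F S :=
  stmt_7_general F Ind hF0 hmono hsub hIempty hIdown hIexch L hnodup S hS hstep hstop
end
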